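/- arXiv:2008.07080 — 6 statements merged into one kernel-verified Lean document; each statement's English description precedes it below -/
import Mathlib

section
/- Let J ⊆ ℝ^s be a closed convex cone, H ⊆ ℝ^n a compact set, g_ι : ℝ^n → ℝ^s a continuously differentiable map, and g_e : ℝ^n → ℝ^t a surjective affine map. Set g := (g_ι, g_e) : ℝ^n → ℝ^s × ℝ^t and K := J × {0}, so that K* = J* × ℝ^t. Suppose there exists z̄ ∈ H with g_ι(z̄) ∈ −int J and g_e(z̄) = 0. Then there exists τ ∈ (0,1] such that max{‖∇g(z)p‖, |⟨p, g(z̄)⟩|} ≥ τ‖p‖ for every z ∈ H and every p ∈ K*. -/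
open RealInnerProductSpace Pointwise

/-- The dual cone of a set in a real inner product space. -/
def dualCone {F : Type*} [NormedAddCommGroup F] [InnerProductSpace ℝ F] (K : Set F) : Set F :=
  {y | ∀ x ∈ K, 0 ≤ ⟪y, x⟫}

/-- Slater-like assumption implies the generalized condition (B4).
Here `g = (gι, ge) : ℝⁿ → ℝˢ × ℝᵗ` and `K = J × {0}`, so that `K* = J* × ℝᵗ`; a generic
element of `K*` is written as a pair `(pι, pe)` with `pι ∈ J*` and `pe` arbitrary, its norm
being `√(‖pι‖² + ‖pe‖²)`, and `∇g(z)(pι, pe) = ∇gι(z)pι + Aᵀpe`, where `A` is the linear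
part of the affine map `ge`. -/
theorem slater_implies_generalized_B4
    {E Fs Ft : Type*}
    [NormedAddCommGroup E] [InnerProductSpace ℝ E] [FiniteDimensional ℝ E]
    [NormedAddCommGroup Fs] [InnerProductSpace ℝ Fs] [FiniteDimensional ℝ Fs]
    [NormedAddCommGroup Ft] [InnerProductSpace ℝ Ft] [FiniteDimensional ℝ Ft]
    -- J is a closed convex cone
    (J : Set Fs) (hJcl : IsClosed J) (hJcvx : Convex ℝ J)
    (hJcone : ∀ t : ℝ, 0 < t → ∀ x ∈ J, t • x ∈ J)
    -- H is compact
    (H : Set E) (hHcpt : IsCompact H)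
    -- gι is continuously differentiable
    (gι : E → Fs) (gι' : E → (E →L[ℝ] Fs))
    (hgιdiff : ∀ z, HasFDerivAt gι (gι' z) z) (hgιcont : Continuous gι')
    -- ge is a surjective affine map with linear part A
    (ge : E → Ft) (A : E →L[ℝ] Ft) (b : Ft) (hge : ∀ x, ge x = A x + b)
    (hgesurj : Function.Surjective ge)
    -- Slater point
    (zbar : E) (hzbar : zbar ∈ H)
    (hslater_ι : gι zbar ∈ -interior J) (hslater_e : ge zbar = 0) :
    ∃ τ : ℝ, τ ∈ Set.Ioc (0 : ℝ) 1 ∧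
      ∀ z ∈ H, ∀ pι ∈ dualCone J, ∀ pe : Ft,
        τ * Real.sqrt (‖pι‖ ^ 2 + ‖pe‖ ^ 2) ≤
          max ‖(gι' z).adjoint pι + A.adjoint pe‖ |⟪pι, gι zbar⟫ + ⟪pe, ge zbar⟫| := by
  -- A is surjective
  have hAsurj : Function.Surjective A := by
    intro y
    obtain ⟨x, hx⟩ := hgesurj (y + b)
    rw [hge x] at hx
    exact ⟨x, add_right_cancel hx⟩
  -- adjoint of A is injective
  have hAadj : ∀ pe : Ft, A.adjoint pe = 0 → pe = 0 := by
    intro pe h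
    obtain ⟨x, hx⟩ := hAsurj pe
    have h1 : ⟪A.adjoint pe, x⟫ = ⟪pe, A x⟫ := ContinuousLinearMap.adjoint_inner_left A x pe
    rw [h, inner_zero_left, hx] at h1
    exact inner_self_eq_zero.mp h1.symm
  have hy : -gι zbar ∈ interior J := Set.mem_neg.mp hslater_ι
  -- key: pι ∈ J*, ⟪pι, gι zbar⟫ = 0 ⇒ pι = 0
  have hkey : ∀ pι ∈ dualCone J, ⟪pι, gι zbar⟫ = 0 → pι = 0 := by
    intro pι hpι h0
    by_contra hne
    have hnpos : 0 < ‖pι‖ := norm_pos_iff.mpr hne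
    obtain ⟨ε, hε, hball⟩ := Metric.isOpen_iff.mp isOpen_interior _ hy
    set v : Fs := -((ε / 2) / ‖pι‖) • pι with hv
    have hvn : ‖v‖ = ε / 2 := by
      rw [hv, norm_smul, Real.norm_eq_abs, abs_neg, abs_div, abs_of_pos (by linarith),
        abs_of_pos hnpos, div_mul_cancel₀]
      exact ne_of_gt hnpos
    have hmem : -gι zbar + v ∈ J := by
      apply interior_subset
      apply hball
      rw [Metric.mem_ball, dist_eq_norm, add_sub_cancel_left, hvn]
      linarith
    have h2 := hpι _ hmem
    rw [inner_add_right, inner_neg_right, h0, neg_zero, zero_add, real_inner_smul_right,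
      real_inner_self_eq_norm_sq] at h2
    nlinarith [mul_pos (div_pos (by linarith : (0:ℝ) < ε / 2) hnpos) (pow_pos hnpos 2)]
  -- the compact slice of the dual cone
  set D : Set (Fs × Ft) := {p | p.1 ∈ dualCone J ∧ ‖p.1‖ ^ 2 + ‖p.2‖ ^ 2 = 1} with hD
  have hDcl : IsClosed D := by
    apply IsClosed.inter
    · have h1 : IsClosed (dualCone J) := by
        have : dualCone J = ⋂ x ∈ J, {y : Fs | 0 ≤ ⟪y, x⟫} := by
          ext y; simp [dualCone]
        rw [this]
        exact isClosed_biInter fun x _ =>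
          isClosed_le continuous_const (continuous_id.inner continuous_const)
      exact h1.preimage continuous_fst
    · exact isClosed_eq (by fun_prop) continuous_const
  have hDcpt : IsCompact D := by
    refine (isCompact_closedBall (0 : Fs × Ft) 1).of_isClosed_subset hDcl ?_
    intro p hp
    rw [Metric.mem_closedBall, dist_zero_right, Prod.norm_def]
    have h := hp.2
    have h1 : ‖p.1‖ ≤ 1 := by nlinarith [norm_nonneg p.1, norm_nonneg p.2, sq_nonneg ‖p.2‖]
    have h2 : ‖p.2‖ ≤ 1 := by nlinarith [norm_nonneg p.1, norm_nonneg p.2, sq_nonneg ‖p.1‖]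
    exact sup_le h1 h2
  -- the objective function
  set F : E × (Fs × Ft) → ℝ := fun q =>
    max ‖(gι' q.1).adjoint q.2.1 + A.adjoint q.2.2‖ |⟪q.2.1, gι zbar⟫| with hF
  have hFcont : Continuous F := by
    apply Continuous.max
    · apply Continuous.norm
      apply Continuous.add
      · exact Continuous.clm_apply
          ((ContinuousLinearMap.adjoint : (E →L[ℝ] Fs) ≃ₗᵢ⋆[ℝ] (Fs →L[ℝ] E)).continuous.comp
            (hgιcont.comp continuous_fst)) (continuous_snd.fst)
      · exact (A.adjoint.continuous.comp continuous_snd.snd)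
    · exact ((continuous_snd.fst.inner continuous_const)).abs
  have hFnonneg : ∀ q, 0 ≤ F q := fun q => le_trans (norm_nonneg _) (le_max_left _ _)
  -- uniform lower bound on H ×ˢ D
  have hmain : ∃ τ₀ : ℝ, 0 < τ₀ ∧ ∀ z ∈ H, ∀ p ∈ D, τ₀ ≤ F (z, p) := by
    rcases D.eq_empty_or_nonempty with hDe | hDne
    · exact ⟨1, one_pos, fun z _ p hp => by rw [hDe] at hp; exact absurd hp (Set.notMem_empty p)⟩
    · obtain ⟨q₀, hq₀mem, hq₀min⟩ :=
        (hHcpt.prod hDcpt).exists_isMinOn (Set.Nonempty.prod ⟨zbar, hzbar⟩ hDne)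
          hFcont.continuousOn
      refine ⟨F q₀, ?_, fun z hz p hp => isMinOn_iff.mp hq₀min (z, p) (Set.mk_mem_prod hz hp)⟩
      rcases (hFnonneg q₀).lt_or_eq with h | h
      · exact h
      · exfalso
        obtain ⟨hz₀, hp₀J, hp₀n⟩ := Set.mem_prod.mp hq₀mem
        have hmax : max ‖(gι' q₀.1).adjoint q₀.2.1 + A.adjoint q₀.2.2‖ |⟪q₀.2.1, gι zbar⟫| = 0 :=
          h.symm
        have hinner : ⟪q₀.2.1, gι zbar⟫ = 0 := by
          have := le_trans (le_max_right _ _) hmax.le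
          exact abs_eq_zero.mp (le_antisymm this (abs_nonneg _))
        have hp1 : q₀.2.1 = 0 := hkey _ hp₀J hinner
        have hnorm0 : (gι' q₀.1).adjoint q₀.2.1 + A.adjoint q₀.2.2 = 0 := by
          have := le_trans (le_max_left _ _) hmax.le
          exact norm_eq_zero.mp (le_antisymm this (norm_nonneg _))
        have hp2 : q₀.2.2 = 0 := by
          apply hAadj
          rw [hp1, map_zero, zero_add] at hnorm0
          exact hnorm0
        rw [hp1, hp2] at hp₀n
        simp at hp₀n
  obtain ⟨τ₀, hτ₀pos, hτ₀⟩ := hmain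
  refine ⟨min τ₀ 1, ⟨lt_min hτ₀pos one_pos, min_le_right _ _⟩, ?_⟩
  intro z hz pι hpι pe
  rw [hslater_e, inner_zero_right, add_zero]
  set r : ℝ := Real.sqrt (‖pι‖ ^ 2 + ‖pe‖ ^ 2) with hr
  have hr0 : 0 ≤ r := Real.sqrt_nonneg _
  by_cases hrz : r = 0
  · rw [hrz, mul_zero]
    exact le_trans (abs_nonneg _) (le_max_right _ _)
  · have hrpos : 0 < r := lt_of_le_of_ne hr0 (Ne.symm hrz)
    have hr2 : r ^ 2 = ‖pι‖ ^ 2 + ‖pe‖ ^ 2 := Real.sq_sqrt (by positivity)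
    have hp' : ((r⁻¹ • pι, r⁻¹ • pe) : Fs × Ft) ∈ D := by
      constructor
      · intro x hx
        rw [real_inner_smul_left]
        exact mul_nonneg (inv_nonneg.mpr hr0) (hpι x hx)
      · simp only [norm_smul, Real.norm_eq_abs, abs_of_pos (inv_pos.mpr hrpos), mul_pow]
        rw [← mul_add, ← hr2]
        field_simp
    have hle : min τ₀ 1 ≤ F (z, (r⁻¹ • pι, r⁻¹ • pe)) :=
      le_trans (min_le_left _ _) (hτ₀ z hz _ hp')
    have hFeq : F (z, (r⁻¹ • pι, r⁻¹ • pe)) =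
        r⁻¹ * max ‖(gι' z).adjoint pι + A.adjoint pe‖ |⟪pι, gι zbar⟫| := by
      show max _ _ = _
      rw [map_smul, map_smul, ← smul_add, norm_smul, Real.norm_eq_abs,
        abs_of_pos (inv_pos.mpr hrpos), real_inner_smul_left, abs_mul,
        abs_of_pos (inv_pos.mpr hrpos)]
      exact (mul_max_of_nonneg _ _ (inv_nonneg.mpr hr0)).symm
    rw [hFeq, inv_mul_eq_div, le_div_iff₀ hrpos] at hle
    exact hle
end

section
/- Let K ⊆ ℝ^ℓ be a nonempty closed convex cone, let g : ℝ^n → ℝ^ℓ be K-convex and differentiable, and fix c > 0 and p ∈ ℝ^ℓ. Then the function z ↦ (1/(2c))[dist²(p + c g(z), −K) − ‖p‖²] is convex and differentiable on ℝ^n, and its gradient at z equals ∇g(z) Π_{K*}(p + c g(z)). -/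
open RealInnerProductSpace Pointwise

/-- `p` is the Euclidean projection of `x` onto `S`. -/
def IsProjOn {F : Type*} [NormedAddCommGroup F] [InnerProductSpace ℝ F]
    (S : Set F) (x p : F) : Prop :=
  p ∈ S ∧ ∀ y ∈ S, dist x p ≤ dist x y

/-- `g` is `K`-convex. -/
def KConvex {E F : Type*} [NormedAddCommGroup E] [InnerProductSpace ℝ E]
    [NormedAddCommGroup F] [InnerProductSpace ℝ F] (K : Set F) (g : E → F) : Prop :=
  ∀ z z' : E, ∀ t : ℝ, t ∈ Set.Icc (0 : ℝ) 1 →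
    g (t • z' + (1 - t) • z) - t • g z' - (1 - t) • g z ∈ -K

/-
Write `d = infDist · (-K)` and let `u` be the projection of `x` onto the closed convex cone `-K`.
The projection inequality `⟪x - u, w - u⟫ ≤ 0` on `-K` gives the two-sided estimate
`0 ≤ d y ^ 2 - d x ^ 2 - ⟪2 • (x - u), y - x⟫ ≤ ‖y - x‖ ^ 2`, so `d ^ 2` is differentiable with
gradient `2 • (x - u)` and, having a subgradient everywhere, is convex. Since `-K + -K ⊆ -K`,
`d ^ 2` does not increase along `-K`, which together with `K`-convexity of `g` makes
`z ↦ d (p + c • g z) ^ 2` convex. By Moreau's decomposition `x - u` is the projection of `x` onto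
the dual cone `K*`, and the chain rule gives the gradient.
-/

open Metric Set

theorem le_infDist_sq {X : Type*} [PseudoMetricSpace X] {S : Set X} {a : ℝ} {y : X}
    (hS : S.Nonempty) (h : ∀ w ∈ S, a ≤ dist y w ^ 2) : a ≤ infDist y S ^ 2 :=
  (Real.sqrt_le_iff.1 ((le_infDist hS).2 fun w hw =>
    Real.sqrt_le_iff.2 ⟨dist_nonneg, h w hw⟩)).2

theorem infDist_add_le_of_add_mem {G : Type*} [SeminormedAddCommGroup G] {S : Set G}
    (hadd : ∀ a ∈ S, ∀ b ∈ S, a + b ∈ S) {s : G} (hs : s ∈ S) (y : G) :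
    infDist (y + s) S ≤ infDist y S :=
  (le_infDist ⟨s, hs⟩).2 fun w hw =>
    (infDist_le_dist_of_mem (hadd w hw s hs)).trans_eq (dist_add_right y w s)

section Projection

variable {F : Type*} [NormedAddCommGroup F] [InnerProductSpace ℝ F] {S : Set F} {x u v : F}

theorem IsProjOn.infDist_eq (h : IsProjOn S x u) : infDist x S = dist x u :=
  le_antisymm (infDist_le_dist_of_mem h.1) ((le_infDist ⟨u, h.1⟩).2 h.2)

theorem isProjOn_iff_norm_eq_iInf :
    IsProjOn S x u ↔ u ∈ S ∧ ‖x - u‖ = ⨅ w : S, ‖x - w‖ := by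
  have hbdd : BddBelow (range fun w : S => ‖x - w‖) := ⟨0, by rintro _ ⟨w, rfl⟩; positivity⟩
  refine ⟨fun h => ⟨h.1, le_antisymm ?_ (ciInf_le hbdd ⟨u, h.1⟩)⟩, fun ⟨hu, h⟩ => ⟨hu, ?_⟩⟩
  · have : Nonempty S := ⟨⟨u, h.1⟩⟩
    exact le_ciInf fun w => by simpa only [dist_eq_norm] using h.2 w w.2
  · intro w hw
    simpa only [dist_eq_norm, h] using ciInf_le hbdd ⟨w, hw⟩

theorem isProjOn_iff_inner_le_zero (hS : Convex ℝ S) :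
    IsProjOn S x u ↔ u ∈ S ∧ ∀ w ∈ S, ⟪x - u, w - u⟫ ≤ 0 := by
  rw [isProjOn_iff_norm_eq_iInf]
  exact and_congr_right fun hu => norm_eq_iInf_iff_real_inner_le_zero hS hu

theorem exists_isProjOn [CompleteSpace F] (hne : S.Nonempty) (hcl : IsClosed S)
    (hS : Convex ℝ S) (x : F) : ∃ u, IsProjOn S x u := by
  obtain ⟨u, hu, h⟩ := exists_norm_eq_iInf_of_complete_convex hne hcl.isComplete hS x
  exact ⟨u, isProjOn_iff_norm_eq_iInf.2 ⟨hu, h⟩⟩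

theorem IsProjOn.unique (hS : Convex ℝ S) (hu : IsProjOn S x u) (hv : IsProjOn S x v) :
    u = v := by
  have h₁ := ((isProjOn_iff_inner_le_zero hS).1 hu).2 v hv.1
  have h₂ := ((isProjOn_iff_inner_le_zero hS).1 hv).2 u hu.1
  have hsum : ⟪x - u, v - u⟫ + ⟪x - v, u - v⟫ = ‖u - v‖ ^ 2 := by
    rw [← real_inner_self_eq_norm_sq, show v - u = -(u - v) by abel, inner_neg_right,
      neg_add_eq_sub, ← inner_sub_left, sub_sub_sub_cancel_left]
  have : ‖u - v‖ = 0 := by nlinarith [norm_nonneg (u - v)]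
  exact sub_eq_zero.1 (norm_eq_zero.1 this)

end Projection

section Cone

variable {F : Type*} [NormedAddCommGroup F] [InnerProductSpace ℝ F] {K : Set F}

theorem convex_dualCone (K : Set F) : Convex ℝ (dualCone K) := by
  intro y₁ h₁ y₂ h₂ a b ha hb _ k hk
  rw [inner_add_left, real_inner_smul_left, real_inner_smul_left]
  exact add_nonneg (mul_nonneg ha (h₁ k hk)) (mul_nonneg hb (h₂ k hk))

theorem Convex.add_mem_of_smul_mem (hK : Convex ℝ K)
    (hcone : ∀ t : ℝ, 0 < t → ∀ x ∈ K, t • x ∈ K) {a b : F} (ha : a ∈ K) (hb : b ∈ K) :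
    a + b ∈ K := by
  have hmid := hcone 2 two_pos _ (hK ha hb (by norm_num) (by norm_num) (add_halves 1))
  rwa [smul_add, smul_smul, smul_smul, mul_one_div_cancel two_ne_zero, one_smul, one_smul]
    at hmid

/-- Moreau's decomposition: `x = Π_{-K} x + Π_{K*} x`. -/
theorem IsProjOn.isProjOn_dualCone_sub (hK : Convex ℝ K)
    (hcone : ∀ t : ℝ, 0 < t → ∀ x ∈ K, t • x ∈ K) {x u : F} (h : IsProjOn (-K) x u) :
    IsProjOn (dualCone K) x (x - u) := by
  obtain ⟨hu, hvi⟩ := (isProjOn_iff_inner_le_zero hK.neg).1 h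
  have hu' : -u ∈ K := hu
  have horth : ⟪x - u, u⟫ = 0 := by
    have h₂ := hvi ((2 : ℝ) • u) (by simpa [smul_neg] using hcone 2 two_pos _ hu')
    have h₁ := hvi ((1 / 2 : ℝ) • u) (by simpa [smul_neg] using hcone (1 / 2) one_half_pos _ hu')
    rw [show (2 : ℝ) • u - u = u by module] at h₂
    rw [show (1 / 2 : ℝ) • u - u = -((1 / 2 : ℝ) • u) by module, inner_neg_right,
      real_inner_smul_right] at h₁
    linarith
  have hdual : x - u ∈ dualCone K := by
    intro k hk
    have hk' : u - k ∈ -K := by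
      simpa [neg_sub, sub_eq_neg_add] using hK.add_mem_of_smul_mem hcone hu' hk
    have := hvi (u - k) hk'
    rwa [sub_sub_cancel_left, inner_neg_right, neg_nonpos] at this
  refine (isProjOn_iff_inner_le_zero (convex_dualCone K)).2 ⟨hdual, fun w hw => ?_⟩
  rw [sub_sub_cancel, inner_sub_right, real_inner_comm (x - u) u, horth, sub_zero, real_inner_comm]
  simpa [inner_neg_right] using hw (-u) hu'

end Cone

section Gradient

variable {F : Type*} [NormedAddCommGroup F] [InnerProductSpace ℝ F] {f : F → ℝ} {x G : F}

theorem convexOn_univ_of_le_add_inner (h : ∀ x, ∃ G, ∀ y, f x + ⟪G, y - x⟫ ≤ f y) :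
    ConvexOn ℝ univ f := by
  refine ⟨convex_univ, fun y₁ _ y₂ _ a b ha hb hab => ?_⟩
  obtain ⟨G, hG⟩ := h (a • y₁ + b • y₂)
  have hcomb : a * ⟪G, y₁ - (a • y₁ + b • y₂)⟫ + b * ⟪G, y₂ - (a • y₁ + b • y₂)⟫ = 0 := by
    rw [← real_inner_smul_right, ← real_inner_smul_right, ← inner_add_right,
      show a • (y₁ - (a • y₁ + b • y₂)) + b • (y₂ - (a • y₁ + b • y₂)) =
        (1 - (a + b)) • (a • y₁ + b • y₂) by module, hab, sub_self, zero_smul, inner_zero_right]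
  have key := add_le_add (mul_le_mul_of_nonneg_left (hG y₁) ha)
    (mul_le_mul_of_nonneg_left (hG y₂) hb)
  calc f (a • y₁ + b • y₂) = (a + b) * f (a • y₁ + b • y₂) := by rw [hab, one_mul]
    _ ≤ a • f y₁ + b • f y₂ := by simp only [smul_eq_mul]; linarith

variable [CompleteSpace F]

theorem hasGradientAt_of_abs_sub_inner_le (C : ℝ)
    (h : ∀ y, |f y - f x - ⟪G, y - x⟫| ≤ C * ‖y - x‖ ^ 2) : HasGradientAt f G x := by
  rw [hasGradientAt_iff_isLittleO]
  refine (Asymptotics.IsBigO.of_bound C (Filter.Eventually.of_forall fun y => ?_)).trans_isLittleO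
    (Asymptotics.isLittleO_pow_sub_sub x one_lt_two)
  simpa only [Real.norm_eq_abs, norm_pow, abs_norm] using h y

theorem HasGradientAt.comp_hasFDerivAt {E : Type*} [NormedAddCommGroup E] [InnerProductSpace ℝ E]
    [CompleteSpace E] {φ : E → F} {L : E →L[ℝ] F} {z : E}
    (hf : HasGradientAt f G (φ z)) (hφ : HasFDerivAt φ L z) :
    HasGradientAt (fun z => f (φ z)) (L.adjoint G) z := by
  rw [hasGradientAt_iff_hasFDerivAt]
  refine (hf.hasFDerivAt.comp z hφ).congr_fderiv (ContinuousLinearMap.ext fun h => ?_)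
  simp [ContinuousLinearMap.adjoint_inner_left]

theorem HasGradientAt.const_mul_sub_const (a b : ℝ) (hf : HasGradientAt f G x) :
    HasGradientAt (fun y => a * (f y - b)) (a • G) x := by
  rw [hasGradientAt_iff_hasFDerivAt, map_smul]
  exact (hf.hasFDerivAt.sub_const b).const_mul a

end Gradient

section SqInfDist

variable {F : Type*} [NormedAddCommGroup F] [InnerProductSpace ℝ F] {S : Set F} {x u : F}

theorem IsProjOn.infDist_sq_le (h : IsProjOn S x u) (y : F) :
    infDist y S ^ 2 ≤ infDist x S ^ 2 + ⟪(2 : ℝ) • (x - u), y - x⟫ + ‖y - x‖ ^ 2 := by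
  have hy : infDist y S ≤ ‖(x - u) + (y - x)‖ := by
    simpa only [← dist_eq_norm, sub_add_sub_cancel'] using infDist_le_dist_of_mem h.1
  rw [h.infDist_eq, dist_eq_norm, real_inner_smul_left, ← norm_add_sq_real]
  exact pow_le_pow_left₀ infDist_nonneg hy 2

theorem IsProjOn.infDist_sq_add_inner_le (hS : Convex ℝ S) (h : IsProjOn S x u) (y : F) :
    infDist x S ^ 2 + ⟪(2 : ℝ) • (x - u), y - x⟫ ≤ infDist y S ^ 2 := by
  refine le_infDist_sq ⟨u, h.1⟩ fun w hw => ?_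
  have hvi := ((isProjOn_iff_inner_le_zero hS).1 h).2 w hw
  have hsplit : y - w = (x - u) + ((y - x) - (w - u)) := by abel
  rw [h.infDist_eq, dist_eq_norm, dist_eq_norm, hsplit, norm_add_sq_real, real_inner_smul_left,
    inner_sub_right (x - u) (y - x) (w - u)]
  linarith [sq_nonneg ‖(y - x) - (w - u)‖]

theorem IsProjOn.hasGradientAt_infDist_sq [CompleteSpace F] (hS : Convex ℝ S)
    (h : IsProjOn S x u) : HasGradientAt (fun y => infDist y S ^ 2) ((2 : ℝ) • (x - u)) x :=
  hasGradientAt_of_abs_sub_inner_le 1 fun y => abs_le.2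
    ⟨by linarith [h.infDist_sq_add_inner_le hS y, sq_nonneg ‖y - x‖],
      by linarith [h.infDist_sq_le y]⟩

theorem convexOn_infDist_sq [CompleteSpace F] (hne : S.Nonempty) (hcl : IsClosed S)
    (hS : Convex ℝ S) : ConvexOn ℝ univ fun y => infDist y S ^ 2 :=
  convexOn_univ_of_le_add_inner fun x =>
    let ⟨_, hu⟩ := exists_isProjOn hne hcl hS x
    ⟨_, hu.infDist_sq_add_inner_le hS⟩

end SqInfDist

section KConvex

variable {E F : Type*} [NormedAddCommGroup E] [InnerProductSpace ℝ E]
  [NormedAddCommGroup F] [InnerProductSpace ℝ F] {K : Set F} {g : E → F}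

theorem KConvex.const_add_smul (hcone : ∀ t : ℝ, 0 < t → ∀ x ∈ K, t • x ∈ K) (hg : KConvex K g)
    (p : F) {c : ℝ} (hc : 0 < c) : KConvex K fun z => p + c • g z := by
  intro z z' t ht
  have hsmul : -(c • (g (t • z' + (1 - t) • z) - t • g z' - (1 - t) • g z)) ∈ K := by
    simpa only [smul_neg] using hcone c hc _ (hg z z' t ht)
  rw [Set.mem_neg]
  convert hsmul using 2
  module

theorem KConvex.convexOn_comp {Φ : F → ℝ} (hΦ : ConvexOn ℝ univ Φ)
    (hmono : ∀ y, ∀ s ∈ -K, Φ (y + s) ≤ Φ y) (hg : KConvex K g) :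
    ConvexOn ℝ univ fun z => Φ (g z) := by
  refine ⟨convex_univ, fun z _ z' _ a b ha hb hab => ?_⟩
  obtain rfl : a = 1 - b := by linarith
  have hs := hg z z' b ⟨hb, by linarith⟩
  calc Φ (g ((1 - b) • z + b • z'))
      = Φ (((1 - b) • g z + b • g z') + (g (b • z' + (1 - b) • z) - b • g z' - (1 - b) • g z)) := by
        rw [add_comm ((1 - b) • z)]; congr 1; abel
    _ ≤ Φ ((1 - b) • g z + b • g z') := hmono _ _ hs
    _ ≤ (1 - b) • Φ (g z) + b • Φ (g z') := hΦ.2 trivial trivial ha hb hab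

end KConvex

/-- convexity and differentiability of the smooth penalty part of the
augmented Lagrangian, together with its gradient formula
`∇(z ↦ (1/(2c))[dist²(p + c g(z), −K) − ‖p‖²]) = ∇g(z) Π_{K*}(p + c g(z))`. -/
theorem penalty_convex_and_gradient
    {E F : Type*}
    [NormedAddCommGroup E] [InnerProductSpace ℝ E] [FiniteDimensional ℝ E]
    [NormedAddCommGroup F] [InnerProductSpace ℝ F] [FiniteDimensional ℝ F]
    (K : Set F) (hKne : K.Nonempty) (hKcl : IsClosed K) (hKcvx : Convex ℝ K)
    (hKcone : ∀ t : ℝ, 0 < t → ∀ x ∈ K, t • x ∈ K)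
    (g : E → F) (g' : E → (E →L[ℝ] F))
    (hgdiff : ∀ z, HasFDerivAt g (g' z) z) (hgK : KConvex K g)
    (c : ℝ) (hc : 0 < c) (p : F) :
    ConvexOn ℝ Set.univ
      (fun z : E => (1 / (2 * c)) * ((Metric.infDist (p + c • g z) (-K)) ^ 2 - ‖p‖ ^ 2)) ∧
    ∀ z : E, ∀ q : F, IsProjOn (dualCone K) (p + c • g z) q →
      HasGradientAt
        (fun z : E => (1 / (2 * c)) * ((Metric.infDist (p + c • g z) (-K)) ^ 2 - ‖p‖ ^ 2))
        ((g' z).adjoint q) z := by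
  have hnegadd : ∀ a ∈ -K, ∀ b ∈ -K, a + b ∈ -K := fun a ha b hb => by
    rw [Set.mem_neg, neg_add]
    exact hKcvx.add_mem_of_smul_mem hKcone ha hb
  constructor
  · have hcomp := (hgK.const_add_smul hKcone p hc).convexOn_comp
      (convexOn_infDist_sq hKne.neg hKcl.neg hKcvx.neg)
      fun y s hs => pow_le_pow_left₀ infDist_nonneg (infDist_add_le_of_add_mem hnegadd hs y) 2
    exact ((hcomp.add_const (-‖p‖ ^ 2)).smul (by positivity : (0 : ℝ) ≤ 1 / (2 * c))).congr
      fun z _ => by simp only [Pi.add_apply, smul_eq_mul, sub_eq_add_neg]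
  · intro z q hq
    obtain ⟨u, hu⟩ := exists_isProjOn hKne.neg hKcl.neg hKcvx.neg (p + c • g z)
    obtain rfl : q = p + c • g z - u :=
      hq.unique (convex_dualCone K) (hu.isProjOn_dualCone_sub hKcvx hKcone)
    have hinner : HasFDerivAt (fun z => p + c • g z) (c • g' z) z :=
      ((hgdiff z).const_smul c).const_add p
    convert ((hu.hasGradientAt_infDist_sq hKcvx.neg).comp_hasFDerivAt
      (φ := fun z => p + c • g z) hinner).const_mul_sub_const
      (1 / (2 * c)) (‖p‖ ^ 2) using 1
    simp only [map_smulₛₗ, starRingEnd_apply, star_trivial, RingHom.id_apply, FunLike.coe_smul,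
      Pi.smul_apply, smul_smul]
    rw [one_div_mul_cancel (by positivity), one_smul]
end

section
/- Assume (B1)–(B3) and let λ > 0, σ ∈ (0,1), c > 0, z⁻ ∈ H, p⁻ ∈ ℝ^ℓ. Suppose (z, v, ε) ∈ H × ℝ^n × ℝ_+ satisfies the prox condition with data (λ, σ, c, z⁻, p⁻), and set p := Π_{K*}(p⁻ + c g(z)) and r := v + z⁻ − z. Then L_c(z;p) ≤ L_c(z;p⁻) + (1/c)‖p − p⁻‖², and L_c(z;p) ≤ L_c(z⁻;p⁻) − ((1−σ²)/(2λ))‖r‖² + (1/c)‖p − p⁻‖². -/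
open RealInnerProductSpace Pointwise

/-- The ε-subdifferential at `z` of a proper extended-real-valued function represented by
its effective domain `D` and its real values `ψ` on `D` (the function equals `+∞` off `D`). -/
def epsSubdiff {E : Type*} [NormedAddCommGroup E] [InnerProductSpace ℝ E]
    (D : Set E) (ψ : E → ℝ) (ε : ℝ) (z : E) : Set E :=
  {u | ∀ z' ∈ D, ψ z + ⟪u, z' - z⟫ - ε ≤ ψ z'}

/-- The augmented Lagrangian `L_c(z;p)`; the proper closed convex function `h` is represented
by its real values on its effective domain `H`. -/
noncomputable def AugLag {E F : Type*} [NormedAddCommGroup E] [InnerProductSpace ℝ E]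
    [NormedAddCommGroup F] [InnerProductSpace ℝ F]
    (K : Set F) (f h : E → ℝ) (g : E → F) (c : ℝ) (z : E) (p : F) : ℝ :=
  f z + h z + (1 / (2 * c)) * ((Metric.infDist (p + c • g z) (-K)) ^ 2 - ‖p‖ ^ 2)

/-! Since `p` is the projection of `q := p⁻ + c g(z)` onto the closed convex cone `K*`, the
bipolar theorem gives Moreau's decomposition: `q - p ∈ -K` and `⟪q - p, p⟫ = 0`, so
`dist(q, -K) = ‖p‖`. Testing `dist(p + c g(z), -K)` against the point `q - p` bounds it by
`‖2p - p⁻‖`, and the parallelogram law turns this into the first inequality. The second one adds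
the ε-subgradient inequality at `z⁻`, the expansion of `‖r‖²` and the prox condition, using
`σ'² ≤ σ²` because `L^ψ ≥ 1`. -/

section Cones

variable {F : Type*} [NormedAddCommGroup F] [InnerProductSpace ℝ F]

theorem dualCone_eq_innerDual [CompleteSpace F] (s : Set F) :
    dualCone s = ProperCone.innerDual s := by
  ext y
  simp [dualCone, real_inner_comm]

theorem exists_properCone_coe_eq {K : Set F} (hne : K.Nonempty) (hcl : IsClosed K)
    (hcvx : Convex ℝ K) (hcone : ∀ t : ℝ, 0 < t → ∀ x ∈ K, t • x ∈ K) :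
    ∃ C : ProperCone ℝ F, (C : Set F) = K := by
  have hzero : (0 : F) ∈ K := by
    obtain ⟨k, hk⟩ := hne
    have hlim : Filter.Tendsto (fun n : ℕ => (1 / ((n : ℝ) + 1)) • k) Filter.atTop (nhds 0) := by
      simpa using (tendsto_one_div_add_atTop_nhds_zero_nat (𝕜 := ℝ)).smul_const k
    exact hcl.mem_of_tendsto hlim (.of_forall fun n => hcone _ (by positivity) k hk)
  refine ⟨{ carrier := K, zero_mem' := hzero, isClosed' := hcl,
             add_mem' := fun {x y} hx hy => ?_, smul_mem' := fun t x hx => ?_ }, rfl⟩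
  · have hmid := hcone 2 two_pos _ (hcvx hx hy (by norm_num) (by norm_num) (add_halves 1))
    rwa [smul_add, smul_smul, smul_smul, mul_one_div_cancel two_ne_zero, one_smul, one_smul]
      at hmid
  · show (t : ℝ) • x ∈ K
    rcases t.2.eq_or_lt with ht | ht
    · rwa [← ht, zero_smul]
    · exact hcone t ht x hx

theorem IsProjOn.inner_sub_le_zero {S : Set F} (hS : Convex ℝ S) {x p : F}
    (hp : IsProjOn S x p) : ∀ w ∈ S, ⟪x - p, w - p⟫ ≤ 0 := by
  have : Nonempty S := ⟨⟨p, hp.1⟩⟩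
  refine (norm_eq_iInf_iff_real_inner_le_zero hS hp.1).1 (le_antisymm ?_ ?_)
  · exact le_ciInf fun w => by simpa [dist_eq_norm] using hp.2 w w.2
  · exact ciInf_le ⟨0, by rintro _ ⟨w, rfl⟩; exact norm_nonneg _⟩ (⟨p, hp.1⟩ : S)

namespace IsProjOn

variable {C : ProperCone ℝ F} {x p : F}

theorem inner_sub_le_zero_of_mem (hp : IsProjOn (C : Set F) x p) {y : F} (hy : y ∈ C) :
    ⟪x - p, y⟫ ≤ 0 := by
  simpa using hp.inner_sub_le_zero C.convex (p + y) (C.add_mem hp.1 hy)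

theorem inner_sub_self_eq_zero (hp : IsProjOn (C : Set F) x p) : ⟪x - p, p⟫ = 0 := by
  have hzero := hp.inner_sub_le_zero C.convex 0 C.zero_mem
  rw [zero_sub, inner_neg_right] at hzero
  exact le_antisymm (hp.inner_sub_le_zero_of_mem hp.1) (by linarith)

variable [CompleteSpace F]

theorem sub_mem_neg_of_innerDual (hp : IsProjOn (ProperCone.innerDual (C : Set F)) x p) :
    x - p ∈ -(C : Set F) := by
  have hbidual : p - x ∈ ProperCone.innerDual (ProperCone.innerDual (C : Set F) : Set F) := by
    refine ProperCone.mem_innerDual.2 fun y hy => ?_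
    rw [← neg_sub, inner_neg_right, real_inner_comm, neg_nonneg]
    exact hp.inner_sub_le_zero_of_mem hy
  rw [ProperCone.innerDual_innerDual] at hbidual
  rwa [Set.mem_neg, neg_sub]

theorem infDist_neg_eq_norm (hp : IsProjOn (ProperCone.innerDual (C : Set F)) x p) :
    Metric.infDist x (-(C : Set F)) = ‖p‖ := by
  have hpolar := hp.sub_mem_neg_of_innerDual
  refine le_antisymm ?_ ((Metric.le_infDist ⟨_, hpolar⟩).2 fun y hy => ?_)
  · simpa [dist_eq_norm] using Metric.infDist_le_dist_of_mem (x := x) hpolar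
  have hpy : 0 ≤ -⟪p, y⟫ := by
    rw [← inner_neg_right, real_inner_comm]
    exact ProperCone.mem_innerDual.1 hp.1 hy
  have horth : ⟪p, x - p⟫ = 0 := by rw [real_inner_comm]; exact hp.inner_sub_self_eq_zero
  have hsq : ‖p‖ ^ 2 ≤ ‖x - y‖ ^ 2 := by
    rw [show x - y = p + (x - p - y) by abel, norm_add_sq_real, inner_sub_right, horth]
    linarith [sq_nonneg ‖x - p - y‖]
  rw [dist_eq_norm]
  exact (pow_le_pow_iff_left₀ (norm_nonneg _) (norm_nonneg _) two_ne_zero).1 hsq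

end IsProjOn

end Cones

section AugLag

variable {E F : Type*} [NormedAddCommGroup E] [InnerProductSpace ℝ E]
  [NormedAddCommGroup F] [InnerProductSpace ℝ F]

theorem augLag_le_of_isProjOn_innerDual [CompleteSpace F] (C : ProperCone ℝ F) (f h : E → ℝ)
    (g : E → F) {c : ℝ} (hc : 0 < c) (z : E) {pm p : F}
    (hp : IsProjOn (ProperCone.innerDual (C : Set F)) (pm + c • g z) p) :
    AugLag C f h g c z p ≤ AugLag C f h g c z pm + (1 / c) * ‖p - pm‖ ^ 2 := by
  have hshift : Metric.infDist (p + c • g z) (-(C : Set F)) ≤ ‖p + (p - pm)‖ := by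
    have := Metric.infDist_le_dist_of_mem (x := p + c • g z) hp.sub_mem_neg_of_innerDual
    rwa [dist_eq_norm, show p + c • g z - (pm + c • g z - p) = p + (p - pm) by abel] at this
  have hparallelogram := parallelogram_law_with_norm ℝ p (p - pm)
  rw [sub_sub_cancel] at hparallelogram
  have hdist_sq : Metric.infDist (p + c • g z) (-(C : Set F)) ^ 2 - ‖p‖ ^ 2 ≤
      ‖p‖ ^ 2 - ‖pm‖ ^ 2 + 2 * ‖p - pm‖ ^ 2 := by
    linarith [pow_le_pow_left₀ Metric.infDist_nonneg hshift 2]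
  unfold AugLag
  rw [hp.infDist_neg_eq_norm, show 1 / c * ‖p - pm‖ ^ 2 = 1 / (2 * c) * (2 * ‖p - pm‖ ^ 2) by
    field_simp]
  linarith [mul_le_mul_of_nonneg_left hdist_sq (by positivity : 0 ≤ 1 / (2 * c))]

theorem le_sub_of_mem_epsSubdiff_prox {D : Set E} {φ : E → ℝ} {lam ε s : ℝ} {zm z v : E}
    (hlam : 0 < lam) (hzm : zm ∈ D)
    (hv : v ∈ epsSubdiff D (fun u => lam * φ u + (1 / 2) * ‖u - zm‖ ^ 2) ε z)
    (hvineq : ‖v‖ ^ 2 + 2 * ε ≤ s * ‖v + zm - z‖ ^ 2) :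
    φ z ≤ φ zm - ((1 - s) / (2 * lam)) * ‖v + zm - z‖ ^ 2 := by
  have hsub := hv zm hzm
  simp only [sub_self, norm_zero, ne_eq, OfNat.ofNat_ne_zero, not_false_eq_true, zero_pow,
    mul_zero, add_zero, norm_sub_rev z zm] at hsub
  have hr : ‖v + zm - z‖ ^ 2 = ‖v‖ ^ 2 + 2 * ⟪v, zm - z⟫ + ‖zm - z‖ ^ 2 := by
    rw [add_sub_assoc, norm_add_sq_real]
  rw [← mul_le_mul_iff_right₀ hlam, mul_sub,
    show lam * ((1 - s) / (2 * lam) * ‖v + zm - z‖ ^ 2) = (1 - s) / 2 * ‖v + zm - z‖ ^ 2 by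
      field_simp]
  linarith

end AugLag

theorem auglag_decrease_general
    {E F : Type*}
    [NormedAddCommGroup E] [InnerProductSpace ℝ E]
    [NormedAddCommGroup F] [InnerProductSpace ℝ F] [FiniteDimensional ℝ F]
    -- K is a nonempty closed convex cone
    (K : Set F) (hKne : K.Nonempty) (hKcl : IsClosed K) (hKcvx : Convex ℝ K)
    (hKcone : ∀ t : ℝ, 0 < t → ∀ x ∈ K, t • x ∈ K)
    -- (B1): h proper closed convex, K_h-Lipschitz on its compact domain H of diameter ≤ Dh
    (H : Set E) (h : E → ℝ)
    -- (B2): f differentiable on H with lower curvature m_f and L_f-Lipschitz gradient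
    (f : E → ℝ) (Lf : ℝ) (hLf : 0 < Lf)
    -- (B3): g K-convex and differentiable with L_g-Lipschitz derivative
    (g : E → F) (Lg : ℝ) (hLg : 0 < Lg)
    -- bounds B_g⁽⁰⁾ and B_g⁽¹⁾
    (Bg0 Bg1 : ℝ) (hBg0 : ∀ z ∈ H, ‖g z‖ ≤ Bg0)
    -- data of the prox subproblem
    (lam σ c : ℝ) (hlam : 0 < lam) (hc : 0 < c)
    (zm : E) (hzm : zm ∈ H) (pm : F)
    (Lψ : ℝ) (hLψ : Lψ = lam * (Lf + Lg * ‖pm‖ + c * (Bg0 * Lg + Bg1 ^ 2)) + 1)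
    (σ' : ℝ) (hσ' : σ' = σ / Real.sqrt Lψ)
    -- the inexact solution (z, v, ε) of the prox subproblem
    (z : E) (hz : z ∈ H) (v : E) (ε : ℝ)
    (hv : v ∈ epsSubdiff H
      (fun u => lam * AugLag K f h g c u pm + (1 / 2) * ‖u - zm‖ ^ 2) ε z)
    (hvineq : ‖v‖ ^ 2 + 2 * ε ≤ σ' ^ 2 * ‖v + zm - z‖ ^ 2)
    -- multiplier update and residual
    (p : F) (hp : IsProjOn (dualCone K) (pm + c • g z) p)
    (r : E) (hr : r = v + zm - z) :
    -- conclusions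
    AugLag K f h g c z p ≤ AugLag K f h g c z pm + (1 / c) * ‖p - pm‖ ^ 2 ∧
    AugLag K f h g c z p ≤ AugLag K f h g c zm pm
      - ((1 - σ ^ 2) / (2 * lam)) * ‖r‖ ^ 2 + (1 / c) * ‖p - pm‖ ^ 2 := by
  obtain ⟨C, rfl⟩ := exists_properCone_coe_eq hKne hKcl hKcvx hKcone
  rw [dualCone_eq_innerDual] at hp
  have hmultiplier := augLag_le_of_isProjOn_innerDual C f h g hc z hp
  have hprox := le_sub_of_mem_epsSubdiff_prox hlam hzm hv hvineq
  have hLψ_ge : 1 ≤ Lψ := by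
    have hBg0_nonneg : 0 ≤ Bg0 := (norm_nonneg _).trans (hBg0 z hz)
    rw [hLψ, le_add_iff_nonneg_left]
    positivity
  have hσ'_le : σ' ^ 2 ≤ σ ^ 2 := by
    rw [hσ', div_pow, Real.sq_sqrt (zero_le_one.trans hLψ_ge)]
    exact div_le_self (sq_nonneg σ) hLψ_ge
  have hresidual : (1 - σ ^ 2) / (2 * lam) * ‖r‖ ^ 2 ≤ (1 - σ' ^ 2) / (2 * lam) * ‖r‖ ^ 2 := by
    gcongr
  subst hr
  exact ⟨hmultiplier, by linarith⟩

/-- decrease of the augmented Lagrangian along one NL-IAPIAL prox step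
(Lemma 4.4 of the paper). -/
theorem auglag_decrease
    {E F : Type*}
    [NormedAddCommGroup E] [InnerProductSpace ℝ E] [FiniteDimensional ℝ E]
    [NormedAddCommGroup F] [InnerProductSpace ℝ F] [FiniteDimensional ℝ F]
    -- K is a nonempty closed convex cone
    (K : Set F) (hKne : K.Nonempty) (hKcl : IsClosed K) (hKcvx : Convex ℝ K)
    (hKcone : ∀ t : ℝ, 0 < t → ∀ x ∈ K, t • x ∈ K)
    -- (B1): h proper closed convex, K_h-Lipschitz on its compact domain H of diameter ≤ Dh
    (H : Set E) (h : E → ℝ) (Kh Dh : ℝ) (hKh : 0 < Kh) (hDh0 : 0 < Dh)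
    (hHne : H.Nonempty) (hHcpt : IsCompact H) (hHcvx : Convex ℝ H)
    (hhcvx : ConvexOn ℝ H h)
    (hhlip : ∀ x ∈ H, ∀ y ∈ H, |h x - h y| ≤ Kh * ‖x - y‖)
    (hDh : ∀ x ∈ H, ∀ y ∈ H, ‖x - y‖ ≤ Dh)
    -- (B2): f differentiable on H with lower curvature m_f and L_f-Lipschitz gradient
    (f : E → ℝ) (f' : E → E) (mf Lf : ℝ) (hmf : 0 < mf) (hLf : 0 < Lf)
    (hfdiff : ∀ z ∈ H, HasGradientAt f (f' z) z)
    (hflow : ∀ z ∈ H, ∀ z' ∈ H, -(mf / 2) * ‖z' - z‖ ^ 2 ≤ f z' - f z - ⟪f' z, z' - z⟫)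
    (hflip : ∀ z ∈ H, ∀ z' ∈ H, ‖f' z' - f' z‖ ≤ Lf * ‖z' - z‖)
    -- (B3): g K-convex and differentiable with L_g-Lipschitz derivative
    (g : E → F) (g' : E → (E →L[ℝ] F)) (Lg : ℝ) (hLg : 0 < Lg)
    (hgdiff : ∀ z, HasFDerivAt g (g' z) z) (hgK : KConvex K g)
    (hglip : ∀ z z' : E, ‖g' z' - g' z‖ ≤ Lg * ‖z' - z‖)
    -- bounds B_g⁽⁰⁾ and B_g⁽¹⁾
    (Bg0 Bg1 : ℝ) (hBg0 : ∀ z ∈ H, ‖g z‖ ≤ Bg0) (hBg1 : ∀ z ∈ H, ‖g' z‖ ≤ Bg1)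
    -- data of the prox subproblem
    (lam σ c : ℝ) (hlam : 0 < lam) (hσ0 : 0 < σ) (hσ1 : σ < 1) (hc : 0 < c)
    (zm : E) (hzm : zm ∈ H) (pm : F)
    (Lψ : ℝ) (hLψ : Lψ = lam * (Lf + Lg * ‖pm‖ + c * (Bg0 * Lg + Bg1 ^ 2)) + 1)
    (σ' : ℝ) (hσ' : σ' = σ / Real.sqrt Lψ)
    -- the inexact solution (z, v, ε) of the prox subproblem
    (z : E) (hz : z ∈ H) (v : E) (ε : ℝ) (hε : 0 ≤ ε)
    (hv : v ∈ epsSubdiff H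
      (fun u => lam * AugLag K f h g c u pm + (1 / 2) * ‖u - zm‖ ^ 2) ε z)
    (hvineq : ‖v‖ ^ 2 + 2 * ε ≤ σ' ^ 2 * ‖v + zm - z‖ ^ 2)
    -- multiplier update and residual
    (p : F) (hp : IsProjOn (dualCone K) (pm + c • g z) p)
    (r : E) (hr : r = v + zm - z) :
    -- conclusions
    AugLag K f h g c z p ≤ AugLag K f h g c z pm + (1 / c) * ‖p - pm‖ ^ 2 ∧
    AugLag K f h g c z p ≤ AugLag K f h g c zm pm
      - ((1 - σ ^ 2) / (2 * lam)) * ‖r‖ ^ 2 + (1 / c) * ‖p - pm‖ ^ 2 :=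
  auglag_decrease_general K hKne hKcl hKcvx hKcone H h f Lf hLf g Lg hLg Bg0 Bg1 hBg0 lam σ c hlam
    hc zm hzm pm Lψ hLψ σ' hσ' z hz v ε hv hvineq p hp r hr
end

section
/- Let φ̃ : ℝ^n → (−∞,+∞] be a proper function, let σ̃ ∈ (0,1), and let z₀ ∈ ℝ^n and z₁ ∈ dom φ̃. Suppose there exists a pair (v₁, ε₁) ∈ ℝ^n × ℝ_+ such that v₁ ∈ ∂_{ε₁}(φ̃ + (1/2)‖·−z₀‖²)(z₁) and ‖v₁‖² + 2ε₁ ≤ σ̃²‖v₁ + z₀ − z₁‖². Then for every z ∈ ℝ^n and every s > 0, one has φ̃(z₁) + (1/2)[1 − σ̃²(1 + s⁻¹)]‖v₁ + z₀ − z₁‖² ≤ φ̃(z) + ((s+1)/2)‖z − z₀‖². -/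
/-
Subtracting the quadratic `½‖· - z₀‖²` from the ε-subgradient inequality of the regularised
function leaves `φ z₁ + ½‖v₁ + z₀ - z₁‖² - ½‖v₁‖² + ⟪v₁, z - z₀⟫ - ε₁` below
`φ z + ½‖z - z₀‖²`. Young's inequality `⟪v₁, w⟫ ≥ -‖v₁‖²/(2s) - (s/2)‖w‖²` removes `z` from the
left at the price of `(s/2)‖z - z₀‖²`, and the relative error criterion bounds the remaining
`½(1 + s⁻¹)‖v₁‖² + ε₁` by `½(1 + s⁻¹)σ̃²‖v₁ + z₀ - z₁‖²`.
-/

open RealInnerProductSpace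

theorem neg_norm_sq_div_le_inner_add_mul_norm_sq {E : Type*} [NormedAddCommGroup E]
    [InnerProductSpace ℝ E] (v w : E) {s : ℝ} (hs : 0 < s) :
    -(‖v‖ ^ 2 / (2 * s)) ≤ ⟪v, w⟫ + s / 2 * ‖w‖ ^ 2 := by
  have hsq : 0 ≤ ‖v‖ ^ 2 + 2 * (s * ⟪v, w⟫) + s ^ 2 * ‖w‖ ^ 2 := by
    have h := sq_nonneg ‖v + s • w‖
    rwa [norm_add_sq_real, real_inner_smul_right, norm_smul, Real.norm_of_nonneg hs.le,
      mul_pow] at h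
  have hdiv : ⟪v, w⟫ + s / 2 * ‖w‖ ^ 2 + ‖v‖ ^ 2 / (2 * s) =
      (‖v‖ ^ 2 + 2 * (s * ⟪v, w⟫) + s ^ 2 * ‖w‖ ^ 2) / (2 * s) := by
    field_simp
    ring
  rw [neg_le_iff_add_nonneg, hdiv]
  exact div_nonneg hsq (by positivity)

theorem epsSubdiff_add_half_norm_sub_sq_lower_bound {E : Type*} [NormedAddCommGroup E]
    [InnerProductSpace ℝ E] {D : Set E} {φ : E → ℝ} {z₀ z₁ v : E} {ε : ℝ}
    (hv : v ∈ epsSubdiff D (fun u => φ u + (1 / 2) * ‖u - z₀‖ ^ 2) ε z₁)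
    {z : E} (hz : z ∈ D) {s : ℝ} (hs : 0 < s) :
    φ z₁ + (1 / 2) * ‖v + z₀ - z₁‖ ^ 2 - (1 / 2) * (1 + s⁻¹) * ‖v‖ ^ 2 - ε ≤
      φ z + ((s + 1) / 2) * ‖z - z₀‖ ^ 2 := by
  have hsub := hv z hz
  have hyoung := neg_norm_sq_div_le_inner_add_mul_norm_sq v (z - z₀) hs
  have hexpand : ‖v + z₀ - z₁‖ ^ 2 = ‖v‖ ^ 2 - 2 * ⟪v, z₁ - z₀⟫ + ‖z₁ - z₀‖ ^ 2 := by
    rw [show v + z₀ - z₁ = v - (z₁ - z₀) by abel, norm_sub_sq_real]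
  have hsplit : ⟪v, z - z₁⟫ = ⟪v, z - z₀⟫ - ⟪v, z₁ - z₀⟫ := by
    rw [← inner_sub_right, sub_sub_sub_cancel_right]
  have hinv : ‖v‖ ^ 2 / (2 * s) = (1 / 2) * s⁻¹ * ‖v‖ ^ 2 := by
    field_simp
  linarith

theorem inexact_prox_inequality_general
    {E : Type*} [NormedAddCommGroup E] [InnerProductSpace ℝ E]
    (D : Set E) (φ : E → ℝ)
    (σt : ℝ)
    (z₀ : E) (z₁ : E)
    (v₁ : E) (ε₁ : ℝ) (hε₁ : 0 ≤ ε₁)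
    (hv : v₁ ∈ epsSubdiff D (fun u => φ u + (1 / 2) * ‖u - z₀‖ ^ 2) ε₁ z₁)
    (hineq : ‖v₁‖ ^ 2 + 2 * ε₁ ≤ σt ^ 2 * ‖v₁ + z₀ - z₁‖ ^ 2) :
    ∀ z ∈ D, ∀ s : ℝ, 0 < s →
      φ z₁ + (1 / 2) * (1 - σt ^ 2 * (1 + s⁻¹)) * ‖v₁ + z₀ - z₁‖ ^ 2 ≤
        φ z + ((s + 1) / 2) * ‖z - z₀‖ ^ 2 := by
  intro z hz s hs
  have hbound := epsSubdiff_add_half_norm_sub_sq_lower_bound hv hz hs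
  have herror : (1 + s⁻¹) * (‖v₁‖ ^ 2 + 2 * ε₁) ≤ (1 + s⁻¹) * (σt ^ 2 * ‖v₁ + z₀ - z₁‖ ^ 2) :=
    mul_le_mul_of_nonneg_left hineq (by positivity)
  have hε_inv : 0 ≤ s⁻¹ * ε₁ := by positivity
  linarith

/-- key inequality for an inexact proximal point step.  The proper function
`φ̃ : ℝⁿ → (−∞,∞]` is represented by its effective domain `D` (nonempty, by properness)
and its real values `φ` on `D`. -/
theorem inexact_prox_inequality
    {E : Type*} [NormedAddCommGroup E] [InnerProductSpace ℝ E] [FiniteDimensional ℝ E]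
    (D : Set E) (φ : E → ℝ) (hD : D.Nonempty)
    (σt : ℝ) (hσt0 : 0 < σt) (hσt1 : σt < 1)
    (z₀ : E) (z₁ : E) (hz₁ : z₁ ∈ D)
    (v₁ : E) (ε₁ : ℝ) (hε₁ : 0 ≤ ε₁)
    (hv : v₁ ∈ epsSubdiff D (fun u => φ u + (1 / 2) * ‖u - z₀‖ ^ 2) ε₁ z₁)
    (hineq : ‖v₁‖ ^ 2 + 2 * ε₁ ≤ σt ^ 2 * ‖v₁ + z₀ - z₁‖ ^ 2) :
    ∀ z ∈ D, ∀ s : ℝ, 0 < s →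
      φ z₁ + (1 / 2) * (1 - σt ^ 2 * (1 + s⁻¹)) * ‖v₁ + z₀ - z₁‖ ^ 2 ≤
        φ z + ((s + 1) / 2) * ‖z - z₀‖ ^ 2 :=
  inexact_prox_inequality_general D φ σt z₀ z₁ v₁ ε₁ hε₁ hv hineq
end

section
/- Let ψ_n : ℝ^n → (−∞,+∞] be proper, closed and convex, let z ∈ dom ψ_n, let L > 0, and let ψ_s be differentiable on dom ψ_n with ψ_s(u) − ψ_s(z) − ⟨∇ψ_s(z), u−z⟩ ≤ (L/2)‖u−z‖² for every u ∈ dom ψ_n. Define ẑ := argmin_u {ψ_s(z) + ⟨∇ψ_s(z), u−z⟩ + ψ_n(u) + (L/2)‖u−z‖²}, ê := L(z − ẑ), ζ := ψ_n(z) − ψ_n(ẑ) − ⟨ê − ∇ψ_s(z), z − ẑ⟩, and Δ := (ψ_n + ψ_s)(z) − (ψ_n + ψ_s)(ẑ). Then: (a) ê ∈ ∇ψ_s(z) + ∂_ζ ψ_n(z), ζ ≥ 0, and ζ + ‖ê‖²/(2L) ≤ Δ; (b) ê ∈ ∇ψ_s(z) + ∂ψ_n(ẑ); (c) for any ε > 0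 such that 0 ∈ ∂_ε(ψ_s + ψ_n)(z), one has Δ ≤ ε. -/
open RealInnerProductSpace

/-- properties of a composite gradient step.  The proper closed convex function
`ψ_n : ℝⁿ → (−∞,∞]` is represented by its effective domain `D` and its real values `ψn` on `D`;
closedness is expressed as closedness of its epigraph over `D`.  The gradient `∇ψ_s(z)` is
represented by the vector `gs`. -/
theorem composite_gradient_step
    {E : Type*} [NormedAddCommGroup E] [InnerProductSpace ℝ E] [FiniteDimensional ℝ E]
    (D : Set E) (ψn : E → ℝ) (hDne : D.Nonempty) (hDcvx : Convex ℝ D)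
    (hψncvx : ConvexOn ℝ D ψn)
    (hψncl : IsClosed {q : E × ℝ | q.1 ∈ D ∧ ψn q.1 ≤ q.2})
    (z : E) (hz : z ∈ D) (L : ℝ) (hL : 0 < L)
    (ψs : E → ℝ) (hψsdiff : ∀ x ∈ D, DifferentiableAt ℝ ψs x)
    (gs : E) (hgs : HasGradientAt ψs gs z)
    (hdesc : ∀ u ∈ D, ψs u - ψs z - ⟪gs, u - z⟫ ≤ (L / 2) * ‖u - z‖ ^ 2)
    (zhat : E) (hzhatD : zhat ∈ D)
    (hzhatmin : ∀ u ∈ D,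
      ψs z + ⟪gs, zhat - z⟫ + ψn zhat + (L / 2) * ‖zhat - z‖ ^ 2 ≤
        ψs z + ⟪gs, u - z⟫ + ψn u + (L / 2) * ‖u - z‖ ^ 2)
    (ehat : E) (hehat : ehat = L • (z - zhat))
    (ζ : ℝ) (hζ : ζ = ψn z - ψn zhat - ⟪ehat - gs, z - zhat⟫)
    (Δ : ℝ) (hΔ : Δ = (ψn z + ψs z) - (ψn zhat + ψs zhat)) :
    (ehat - gs ∈ epsSubdiff D ψn ζ z ∧ 0 ≤ ζ ∧ ζ + ‖ehat‖ ^ 2 / (2 * L) ≤ Δ) ∧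
    (ehat - gs ∈ epsSubdiff D ψn 0 zhat) ∧
    (∀ ε : ℝ, 0 < ε → (0 : E) ∈ epsSubdiff D (fun u => ψs u + ψn u) ε z → Δ ≤ ε) := by

  -- Key inequality: (b)
  have key : ∀ u ∈ D, ψn zhat + ⟪ehat - gs, u - zhat⟫ ≤ ψn u := by
    intro u hu
    set A : ℝ := ⟪gs, u - zhat⟫ + ψn u - ψn zhat + L * ⟪zhat - z, u - zhat⟫ with hA
    set B : ℝ := (L / 2) * ‖u - zhat‖ ^ 2 with hB
    have hB0 : 0 ≤ B := by positivity
    have hstep : ∀ t : ℝ, 0 < t → t ≤ 1 → 0 ≤ A + t * B := by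
      intro t ht0 ht1
      have hmem : (1 - t) • zhat + t • u ∈ D :=
        hDcvx hzhatD hu (by linarith) ht0.le (by ring)
      have hmin := hzhatmin _ hmem
      have hcvx := hψncvx.2 hzhatD hu (by linarith : (0:ℝ) ≤ 1 - t) ht0.le (by ring)
      have heq : (1 - t) • zhat + t • u - z = (zhat - z) + t • (u - zhat) := by module
      have hnorm : ‖(1 - t) • zhat + t • u - z‖ ^ 2 =
          ‖zhat - z‖ ^ 2 + 2 * (t * ⟪zhat - z, u - zhat⟫) + t ^ 2 * ‖u - zhat‖ ^ 2 := by
        rw [heq, norm_add_sq_real, real_inner_smul_right, norm_smul]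
        simp only [mul_pow, abs_of_pos ht0, Real.norm_eq_abs, sq_abs]
      have hinner : ⟪gs, (1 - t) • zhat + t • u - z⟫ =
          ⟪gs, zhat - z⟫ + t * ⟪gs, u - zhat⟫ := by
        rw [heq, inner_add_right, real_inner_smul_right]
      rw [hnorm, hinner] at hmin
      simp only [smul_eq_mul] at hcvx
      have h1 : 0 ≤ t * (A + t * B) := by nlinarith [hmin, hcvx]
      nlinarith [h1]
    have hApos : 0 ≤ A := by
      by_contra hneg
      push_neg at hneg
      set t : ℝ := min 1 (-A / (2 * (B + 1))) with ht
      have hBp : 0 < B + 1 := by linarith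
      have ht0 : 0 < t := lt_min one_pos (div_pos (by linarith) (by linarith))
      have ht1 : t ≤ 1 := min_le_left _ _
      have h2 : t ≤ -A / (2 * (B + 1)) := min_le_right _ _
      have h3 : t * (B + 1) ≤ -A / 2 := by
        calc t * (B + 1) ≤ -A / (2 * (B + 1)) * (B + 1) :=
              mul_le_mul_of_nonneg_right h2 hBp.le
          _ = -A / 2 := by field_simp
      have h4 : t * B ≤ -A / 2 := by nlinarith
      have := hstep t ht0 ht1
      linarith
    have he : ⟪ehat - gs, u - zhat⟫ = -L * ⟪zhat - z, u - zhat⟫ - ⟪gs, u - zhat⟫ := by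
      rw [hehat, inner_sub_left, real_inner_smul_left]
      have : z - zhat = -(zhat - z) := by abel
      rw [this, inner_neg_left]
      ring
    rw [he]; linarith
  have hzeta0 : 0 ≤ ζ := by
    have := key z hz
    rw [hζ]; linarith
  have hinner3 : ∀ v z' : E, ⟪v, z' - z⟫ + ⟪v, z - zhat⟫ = ⟪v, z' - zhat⟫ := by
    intro v z'
    rw [← inner_add_right]
    congr 1
    abel
  refine ⟨⟨?_, hzeta0, ?_⟩, ?_, ?_⟩
  · intro z' hz'
    have h := key z' hz'
    have h3 := hinner3 (ehat - gs) z'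
    rw [hζ]; linarith
  · -- ζ + ‖ehat‖²/(2L) ≤ Δ
    have hd := hdesc zhat hzhatD
    have hn : ‖ehat‖ ^ 2 = L ^ 2 * ‖z - zhat‖ ^ 2 := by
      rw [hehat, norm_smul]
      simp [mul_pow, abs_of_pos hL]
    have hie : ⟪ehat, z - zhat⟫ = L * ‖z - zhat‖ ^ 2 := by
      rw [hehat, real_inner_smul_left, real_inner_self_eq_norm_sq]
    have hiz : ⟪gs, zhat - z⟫ = -⟪gs, z - zhat⟫ := by
      have : zhat - z = -(z - zhat) := by abel
      rw [this, inner_neg_right]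
    have hnz : ‖zhat - z‖ = ‖z - zhat‖ := norm_sub_rev _ _
    have hgssplit : ⟪ehat - gs, z - zhat⟫ = ⟪ehat, z - zhat⟫ - ⟪gs, z - zhat⟫ :=
      inner_sub_left _ _ _
    have hL' : ‖ehat‖ ^ 2 / (2 * L) = (L / 2) * ‖z - zhat‖ ^ 2 := by
      rw [hn]; field_simp
    rw [hζ, hΔ, hL', hgssplit, hie]
    rw [hnz, hiz] at hd
    linarith
  · intro z' hz'
    have := key z' hz'
    simpa [epsSubdiff] using this
  · intro ε hε h0
    have := h0 zhat hzhatD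
    simp at this
    rw [hΔ]; linarith
end

section
/- Let M > 0 and μ ≥ 0, and define the sequence {A_j}_{j≥0} by A₀ = 0 and, for j ≥ 1, A_j = A_{j-1} + [μA_{j-1} + 1 + √((μA_{j-1} + 1)² + 4M(μA_{j-1} + 1)A_{j-1})]/(2M). Then for every j ≥ 1, A_j ≥ (1/M)·max{j²/4, (1 + √(μ/(4M)))^{2(j-1)}}. -/
/-- lower bound on the accumulated stepsize coefficients of the ACG method. -/
theorem acg_Aj_lower_bound (M μ : ℝ) (hM : 0 < M) (hμ : 0 ≤ μ)
    (A : ℕ → ℝ) (hA0 : A 0 = 0)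
    (hArec : ∀ j : ℕ, A (j + 1) = A j +
      (μ * A j + 1 + Real.sqrt ((μ * A j + 1) ^ 2 + 4 * M * (μ * A j + 1) * A j)) / (2 * M)) :
    ∀ j : ℕ, 1 ≤ j →
      (1 / M) * max ((j : ℝ) ^ 2 / 4) ((1 + Real.sqrt (μ / (4 * M))) ^ (2 * (j - 1))) ≤ A j := by
  set s := Real.sqrt (μ / (4 * M)) with hs
  have hs0 : 0 ≤ s := Real.sqrt_nonneg _
  have hs2 : μ = 4 * M * s ^ 2 := by
    rw [hs, Real.sq_sqrt (by positivity)]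
    field_simp
  have hApos : ∀ n, 0 ≤ A n := by
    intro n
    induction n with
    | zero => simp [hA0]
    | succ k ih =>
      rw [hArec k]
      have h1 : (0:ℝ) ≤ μ * A k + 1 := by nlinarith [mul_nonneg hμ ih]
      have h2 := Real.sqrt_nonneg ((μ * A k + 1) ^ 2 + 4 * M * (μ * A k + 1) * A k)
      have h3 : (0:ℝ) < 2 * M := by linarith
      exact add_nonneg ih (div_nonneg (by linarith) h3.le)
  have hMrec : ∀ k, M * A (k + 1) = M * A k +
      (μ * A k + 1 + Real.sqrt ((μ * A k + 1) ^ 2 + 4 * M * (μ * A k + 1) * A k)) / 2 := by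
    intro k
    rw [hArec k]
    field_simp
  -- step inequality 1
  have hstep1 : ∀ k, M * A k + 1 / 2 + Real.sqrt (M * A k) ≤ M * A (k + 1) := by
    intro k
    have hAk := hApos k
    have hone : (1:ℝ) ≤ μ * A k + 1 := by nlinarith [mul_nonneg hμ hAk]
    have hsq : (2 * Real.sqrt (M * A k)) ^ 2 ≤
        (μ * A k + 1) ^ 2 + 4 * M * (μ * A k + 1) * A k := by
      have h : Real.sqrt (M * A k) ^ 2 = M * A k := Real.sq_sqrt (by positivity)
      nlinarith [mul_nonneg hM.le hAk]
    have hsqrt : 2 * Real.sqrt (M * A k) ≤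
        Real.sqrt ((μ * A k + 1) ^ 2 + 4 * M * (μ * A k + 1) * A k) := by
      have := Real.sqrt_le_sqrt hsq
      rwa [Real.sqrt_sq (by positivity)] at this
    rw [hMrec k]
    linarith
  -- step inequality 2
  have hstep2 : ∀ k, (M * A k) * (1 + s) ^ 2 ≤ M * A (k + 1) := by
    intro k
    have hAk := hApos k
    have hsq : (4 * M * s * A k) ^ 2 ≤
        (μ * A k + 1) ^ 2 + 4 * M * (μ * A k + 1) * A k := by
      rw [hs2]
      nlinarith [mul_nonneg hM.le hAk, sq_nonneg (4 * M * s ^ 2 * A k + 1)]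
    have hsqrt : 4 * M * s * A k ≤
        Real.sqrt ((μ * A k + 1) ^ 2 + 4 * M * (μ * A k + 1) * A k) := by
      have := Real.sqrt_le_sqrt hsq
      rwa [Real.sqrt_sq (by positivity)] at this
    rw [hMrec k]
    have hμA : 4 * M * s ^ 2 * A k ≤ μ * A k + 1 := by nlinarith
    have hMA : 0 ≤ M * A k * s ^ 2 := by positivity
    nlinarith
  -- bound 1
  have hbound1 : ∀ k : ℕ, (k : ℝ) ^ 2 / 4 ≤ M * A k := by
    intro k
    induction k with
    | zero => simp [hA0]
    | succ n ih =>
      have h1 : ((n : ℝ)) / 2 ≤ Real.sqrt (M * A n) := by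
        have h := Real.sqrt_le_sqrt ih
        have : Real.sqrt ((n : ℝ) ^ 2 / 4) = (n : ℝ) / 2 := by
          rw [show ((n : ℝ) ^ 2 / 4) = ((n : ℝ) / 2) ^ 2 by ring,
            Real.sqrt_sq (by positivity)]
        linarith [this ▸ h]
      have := hstep1 n
      push_cast
      nlinarith
  -- A 1 = 1 / M
  have hA1 : M * A 1 = 1 := by
    have : A 1 = 1 / M := by
      rw [hArec 0, hA0]
      norm_num
      field_simp
    rw [this]
    field_simp
  -- bound 2
  have hbound2 : ∀ k : ℕ, (1 + s) ^ (2 * k) ≤ M * A (k + 1) := by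
    intro k
    induction k with
    | zero => simpa using hA1.ge
    | succ n ih =>
      have h1 : (1 + s) ^ (2 * (n + 1)) = (1 + s) ^ (2 * n) * (1 + s) ^ 2 := by ring
      rw [h1]
      calc (1 + s) ^ (2 * n) * (1 + s) ^ 2 ≤ (M * A (n + 1)) * (1 + s) ^ 2 :=
            mul_le_mul_of_nonneg_right ih (by positivity)
        _ ≤ M * A (n + 2) := hstep2 (n + 1)
  -- conclusion
  intro j hj
  obtain ⟨k, rfl⟩ : ∃ k, j = k + 1 := ⟨j - 1, (Nat.succ_pred_eq_of_pos hj).symm⟩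
  have hsub : k + 1 - 1 = k := rfl
  rw [hsub, one_div, inv_mul_le_iff₀ hM]
  exact max_le (hbound1 (k + 1)) (hbound2 k)
end
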